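/- arXiv:1405.6958 — 2 statements merged into one kernel-verified Lean document; each statement's English description precedes it below -/
import Mathlib

section
/- Let p ≥ 2 and M ≥ 0 be integers, set L = p^(M+1), and let (a_n) be a mod-p Prouhet–Thue–Morse sequence of real numbers, with B_i = Σ_{n=0}^{p-1} w_i(n) · a_n. Define S_p(n) = Σ_{i=1}^{2^{p-1}-1} w_i(n) · B_i, so that a_n = (1/2^{p-1}) w_0(n) B_0 + (1/2^{p-1}) S_p(n). Then for every m with 1 ≤ m ≤ M, Σ_{n=0}^{L-1} n^m · S_p(n) = N_m(L) · B_0, where N_m(L) = 2^{p-1} · P_m − Σ_{n=0}^{L-1} n^m and P_m = Σ_{n ∈ S_0} n^m with S_0 = { n ∈ {0, ..., L-1} : v_p(n) = 0 }. -/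
/-!
Orthogonality of the binary sign patterns,
`∑_{i < 2^(p-1)} w_i(n) w_i(r) = 2^(p-1) [v_p(n) = v_p(r)]`, inverts the transform `a ↦ B`,
so `S_p(n) = 2^(p-1) a_n - B_0`. The theorem then reduces to Prouhet's theorem: for `m < K` the
sums of `n^m` over the `p` classes of `n < p^K` by digit sum mod `p` all agree, whence
`∑_{n<L} n^m a_n = P_m ∑_{r<p} a_r = P_m B_0`. Prouhet's theorem is proved by induction on `K`,
splitting off the last digit `n = d + p q` and expanding `(d + p q)^m` binomially: the terms
with `q^k`, `k < m`, are class-independent by induction, and the top term `p^m q^m`, summed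
over the `p` values of `d`, runs through every class exactly once.
-/

def vp (p n : ℕ) : ℕ := (Nat.digits p n).sum % p

def w (p i n : ℕ) : ℝ := (-1 : ℝ) ^ (i / 2 ^ (p - 1 - vp p n) % 2)

open Finset

section BinarySigns

variable {R : Type*} [Ring R]

lemma neg_one_pow_div_two_pow_mod_two (i a : ℕ) :
    (-1 : R) ^ (i / 2 ^ a % 2) = if i.testBit a then -1 else 1 := by
  rw [Nat.testBit_eq_decide_div_mod_eq]
  rcases Nat.mod_two_eq_zero_or_one (i / 2 ^ a) with h | h <;> simp [h]

lemma neg_one_pow_div_two_pow_mod_two_xor (i a c : ℕ) :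
    (-1 : R) ^ ((i ^^^ 2 ^ c) / 2 ^ a % 2)
      = (if a = c then -1 else 1) * (-1 : R) ^ (i / 2 ^ a % 2) := by
  simp only [neg_one_pow_div_two_pow_mod_two, Nat.testBit_xor, Nat.testBit_two_pow]
  by_cases hac : a = c <;> cases i.testBit a <;> simp [hac, eq_comm]

lemma sum_range_two_pow_eq_zero_of_xor {M : Type*} [AddCommGroup M] {K c : ℕ} (hc : c < K)
    (f : ℕ → M) (hf : ∀ i, f (i ^^^ 2 ^ c) = -f i) :
    ∑ i ∈ range (2 ^ K), f i = 0 := by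
  refine sum_involution (fun i _ => i ^^^ 2 ^ c) (fun i _ => by simp [hf])
    (fun i _ _ h => ?_) (fun i hi => ?_) (fun i _ => xor_cancel_right _ _)
  · simpa using congrArg (Nat.testBit · c) h
  · exact mem_range.2 (Nat.xor_lt_two_pow (mem_range.1 hi) (Nat.pow_lt_pow_right one_lt_two hc))

lemma sum_range_two_pow_neg_one_pow_mul_neg_one_pow {K a b : ℕ} (ha : a ≤ K) (hb : b ≤ K) :
    ∑ i ∈ range (2 ^ K), (-1 : R) ^ (i / 2 ^ a % 2) * (-1 : R) ^ (i / 2 ^ b % 2)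
      = if a = b then 2 ^ K else 0 := by
  split_ifs with hab
  · subst hab
    have hsq (k : ℕ) : (-1 : R) ^ k * (-1) ^ k = 1 := by
      rw [← pow_add, Even.neg_one_pow ⟨k, rfl⟩]
    simp [hsq]
  · -- flipping bit `c`, whichever of `a ≠ b` lies below `K`, negates exactly one factor
    obtain ⟨c, hc, hca⟩ : ∃ c < K, (c = a ∧ b ≠ c) ∨ (c = b ∧ a ≠ c) := by
      rcases lt_or_eq_of_le ha with ha' | rfl
      · exact ⟨a, ha', .inl ⟨rfl, Ne.symm hab⟩⟩
      · exact ⟨b, lt_of_le_of_ne hb (Ne.symm hab), .inr ⟨rfl, hab⟩⟩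
    refine sum_range_two_pow_eq_zero_of_xor hc _ fun i => ?_
    rcases hca with ⟨rfl, hbc⟩ | ⟨rfl, hac⟩ <;>
      simp [neg_one_pow_div_two_pow_mod_two_xor, *]

end BinarySigns

lemma vp_lt {p : ℕ} (hp : 0 < p) (n : ℕ) : vp p n < p := Nat.mod_lt _ hp

lemma vp_of_lt {p r : ℕ} (hr : r < p) : vp p r = r := by
  rcases eq_or_ne r 0 with rfl | hr0
  · simp [vp]
  · simp [vp, Nat.digits_of_lt p r hr0 hr, Nat.mod_eq_of_lt hr]

lemma w_zero_left (p n : ℕ) : w p 0 n = 1 := by simp [w]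

lemma sum_w_mul_w {p : ℕ} (hp : 0 < p) (n r : ℕ) :
    ∑ i ∈ range (2 ^ (p - 1)), w p i n * w p i r
      = if vp p n = vp p r then 2 ^ (p - 1) else 0 := by
  have := vp_lt hp n
  have := vp_lt hp r
  simp only [w]
  rw [sum_range_two_pow_neg_one_pow_mul_neg_one_pow (Nat.sub_le _ _) (Nat.sub_le _ _)]
  congr 1
  exact propext (by omega)

lemma sum_w_mul_eq {p : ℕ} (hp : 0 < p) {a B : ℕ → ℝ} (ha : ∀ n, a n = a (vp p n))
    (hB : ∀ i, B i = ∑ r ∈ range p, w p i r * a r) (n : ℕ) :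
    ∑ i ∈ range (2 ^ (p - 1)), w p i n * B i = 2 ^ (p - 1) * a n := by
  calc ∑ i ∈ range (2 ^ (p - 1)), w p i n * B i
      = ∑ r ∈ range p, (∑ i ∈ range (2 ^ (p - 1)), w p i n * w p i r) * a r := by
        simp only [hB, mul_sum, sum_mul, mul_assoc]
        exact sum_comm
    _ = ∑ r ∈ range p, if vp p n = r then 2 ^ (p - 1) * a r else 0 := by
        refine sum_congr rfl fun r hr => ?_
        rw [sum_w_mul_w hp, vp_of_lt (mem_range.1 hr)]
        split_ifs <;> simp
    _ = 2 ^ (p - 1) * a n := by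
        rw [sum_ite_eq, if_pos (mem_range.2 (vp_lt hp n)), ← ha]

lemma sum_Ico_w_mul_eq {p : ℕ} (hp : 0 < p) {a B : ℕ → ℝ} (ha : ∀ n, a n = a (vp p n))
    (hB : ∀ i, B i = ∑ r ∈ range p, w p i r * a r) (n : ℕ) :
    ∑ i ∈ Ico 1 (2 ^ (p - 1)), w p i n * B i = 2 ^ (p - 1) * a n - B 0 := by
  rw [← sum_w_mul_eq hp ha hB n, range_eq_Ico,
    sum_eq_sum_Ico_succ_bot (a := 0) (Nat.two_pow_pos _),
    w_zero_left, one_mul, add_sub_cancel_left]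

lemma Nat.digits_sum_add_mul {p d q : ℕ} (hp : 1 < p) (hd : d < p) :
    (Nat.digits p (d + p * q)).sum = d + (Nat.digits p q).sum := by
  by_cases h : d = 0 ∧ q = 0
  · obtain ⟨rfl, rfl⟩ := h
    simp
  · rw [Nat.digits_add p hp d q hd (by tauto), List.sum_cons]

lemma sum_range_mul_eq_sum_sum {M : Type*} [AddCommMonoid M] (p N : ℕ) (f : ℕ → M) :
    ∑ n ∈ range (N * p), f n = ∑ q ∈ range N, ∑ d ∈ range p, f (d + p * q) := by
  rw [sum_range, ← finProdFinEquiv.sum_comp, Fintype.sum_prod_type]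
  simp [sum_range]

lemma sum_range_natCast_eq_sum_zmod {M : Type*} [AddCommMonoid M] (p : ℕ) [NeZero p]
    (f : ZMod p → M) : ∑ d ∈ range p, f d = ∑ c, f c :=
  sum_nbij' (↑) ZMod.val (fun _ _ => mem_univ _) (fun c _ => mem_range.2 (ZMod.val_lt c))
    (fun _ hd => ZMod.val_cast_of_lt (mem_range.1 hd)) (fun c _ => ZMod.natCast_zmod_val c)
    (fun _ _ => rfl)

section DigitClasses

variable (R : Type*) [CommSemiring R] {p : ℕ}

def digitClassPowSum (p K m : ℕ) (j : ZMod p) : R :=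
  ∑ n ∈ range (p ^ K) with ((Nat.digits p n).sum : ZMod p) = j, (n : R) ^ m

lemma digitClassPowSum_succ (hp : 1 < p) (K m : ℕ) (j : ZMod p) :
    digitClassPowSum R p (K + 1) m j
      = ∑ d ∈ range p, ∑ k ∈ range (m + 1),
          (m.choose k * p ^ k * d ^ (m - k) : R) * digitClassPowSum R p K k (j - d) := by
  simp only [digitClassPowSum, sum_filter, mul_sum]
  rw [pow_succ, sum_range_mul_eq_sum_sum, sum_comm]
  refine sum_congr rfl fun d hd => ?_
  rw [sum_comm]
  refine sum_congr rfl fun q _ => ?_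
  have hclass : (((Nat.digits p (d + p * q)).sum : ℕ) : ZMod p) = j
      ↔ ((Nat.digits p q).sum : ZMod p) = j - d := by
    rw [Nat.digits_sum_add_mul hp (mem_range.1 hd), Nat.cast_add, eq_sub_iff_add_eq, add_comm]
  simp only [hclass, mul_ite, mul_zero]
  split_ifs
  · rw [Nat.cast_add, Nat.cast_mul, add_comm, add_pow]
    exact sum_congr rfl fun k _ => by ring
  · simp

theorem digitClassPowSum_eq_of_lt (hp : 1 < p) {K m : ℕ} (hm : m < K) (j j' : ZMod p) :
    digitClassPowSum R p K m j = digitClassPowSum R p K m j' := by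
  induction K generalizing m j j' with
  | zero => omega
  | succ K ih =>
    have : NeZero p := ⟨by omega⟩
    suffices h : ∀ j, digitClassPowSum R p (K + 1) m j
        = ∑ d ∈ range p, ∑ k ∈ range m,
            (m.choose k * p ^ k * d ^ (m - k) : R) * digitClassPowSum R p K k 0
          + p ^ m * ∑ c, digitClassPowSum R p K m c by
      rw [h, h]
    intro j
    simp only [digitClassPowSum_succ R hp, sum_range_succ, sum_add_distrib, Nat.choose_self,
      Nat.sub_self, pow_zero, Nat.cast_one, one_mul, mul_one]
    congr 1
    · exact sum_congr rfl fun d _ => sum_congr rfl fun k hk =>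
        by rw [ih (by simp at hk; omega) (j - d) 0]
    · rw [← mul_sum, sum_range_natCast_eq_sum_zmod p (fun c => digitClassPowSum R p K m (j - c))]
      exact congrArg _ ((Equiv.subLeft j).sum_comp _)

end DigitClasses

lemma vp_eq_iff {p n j : ℕ} (hj : j < p) :
    vp p n = j ↔ ((Nat.digits p n).sum : ZMod p) = j := by
  rw [ZMod.natCast_eq_natCast_iff', Nat.mod_eq_of_lt hj, vp]

lemma sum_range_pow_mul_of_vp {R : Type*} [CommSemiring R] {p K m : ℕ} (hp : 1 < p) (hm : m < K)
    {a : ℕ → R} (ha : ∀ n, a n = a (vp p n)) :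
    ∑ n ∈ range (p ^ K), (n : R) ^ m * a n
      = (∑ n ∈ range (p ^ K) with vp p n = 0, (n : R) ^ m) * ∑ r ∈ range p, a r := by
  have hclass (r : ℕ) (hr : r < p) :
      ∑ n ∈ range (p ^ K) with vp p n = r, (n : R) ^ m = digitClassPowSum R p K m r := by
    simp only [digitClassPowSum, vp_eq_iff hr]
  rw [← sum_fiberwise_of_maps_to (g := vp p) (t := range p)
    (fun n _ => mem_range.2 (vp_lt (by omega) n)), mul_sum]
  refine sum_congr rfl fun r hr => ?_
  rw [sum_congr rfl fun n hn => by rw [ha n, (mem_filter.1 hn).2], ← sum_mul,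
    hclass r (mem_range.1 hr), hclass 0 (by omega), digitClassPowSum_eq_of_lt R hp hm]

theorem sum_pow_mul_sidelobe_general (p M : ℕ) (hp : 2 ≤ p) (L : ℕ) (hL : L = p ^ (M + 1))
    (a : ℕ → ℝ) (ha : ∀ n, a n = a (vp p n))
    (B : ℕ → ℝ) (hB : ∀ i, B i = ∑ n ∈ Finset.range p, w p i n * a n)
    (S : ℕ → ℝ) (hS : ∀ n, S n = ∑ i ∈ Finset.Ico 1 (2 ^ (p - 1)), w p i n * B i)
    (m : ℕ) (hm2 : m ≤ M) :
    ∑ n ∈ Finset.range L, (n : ℝ) ^ m * S n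
      = ((2 : ℝ) ^ (p - 1)
            * (∑ n ∈ (Finset.range L).filter (fun n => vp p n = 0), (n : ℝ) ^ m)
          - ∑ n ∈ Finset.range L, (n : ℝ) ^ m) * B 0 := by
  have hB0 : B 0 = ∑ r ∈ range p, a r := by simp [hB, w_zero_left]
  have hS' (n : ℕ) : S n = 2 ^ (p - 1) * a n - B 0 := by
    rw [hS, sum_Ico_w_mul_eq (by omega) ha hB]
  calc ∑ n ∈ range L, (n : ℝ) ^ m * S n
      = 2 ^ (p - 1) * ∑ n ∈ range L, (n : ℝ) ^ m * a n
          - (∑ n ∈ range L, (n : ℝ) ^ m) * B 0 := by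
        simp only [hS', mul_sub, sum_sub_distrib, mul_sum, sum_mul, mul_left_comm]
    _ = _ := by
        rw [hL, sum_range_pow_mul_of_vp hp (by omega) ha, ← hB0]
        ring

/-- Sidelobe theorem: with S_p(n) = Σ_{i=1}^{2^{p-1}-1} w_i(n) B_i,
Σ_{n<L} n^m S_p(n) = N_m(L) B_0 where N_m(L) = 2^{p-1} P_m - Σ_{n<L} n^m. -/
theorem sum_pow_mul_sidelobe (p M : ℕ) (hp : 2 ≤ p) (L : ℕ) (hL : L = p ^ (M + 1))
    (a : ℕ → ℝ) (ha : ∀ n, a n = a (vp p n))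
    (B : ℕ → ℝ) (hB : ∀ i, B i = ∑ n ∈ Finset.range p, w p i n * a n)
    (S : ℕ → ℝ) (hS : ∀ n, S n = ∑ i ∈ Finset.Ico 1 (2 ^ (p - 1)), w p i n * B i)
    (m : ℕ) (hm1 : 1 ≤ m) (hm2 : m ≤ M) :
    ∑ n ∈ Finset.range L, (n : ℝ) ^ m * S n
      = ((2 : ℝ) ^ (p - 1)
            * (∑ n ∈ (Finset.range L).filter (fun n => vp p n = 0), (n : ℝ) ^ m)
          - ∑ n ∈ Finset.range L, (n : ℝ) ^ m) * B 0 :=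
  sum_pow_mul_sidelobe_general p M hp L hL a ha B hB S hS m hm2
end

section
/- Let p ≥ 2 be an integer. For every i with 0 ≤ i ≤ 2^p - 1, every n ≥ 0, and every r with 0 ≤ r < p, the weight sequences satisfy the recurrence w_i(pn + r) = w_{x_r(i)}(n) · w_i(n), where x_r(i) is the degree-p xor-shift of i by r. -/
/-- The degree-p xor-shift of i by r: the bitwise XOR of i with the cyclic
rotation (on p bits) of i by r positions (bit k of the rotation is bit
(k-r) mod p of i). -/
def xorShift (p r i : ℕ) : ℕ := i ^^^ ((i * 2 ^ r) % 2 ^ p + i / 2 ^ (p - r))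

/-!
Appending the digit `r` to `n` in base `p` adds `r` to the digit sum, so
`v_p(pn + r) = (r + v_p(n)) mod p`. Hence the bit of `i` selected by `w_i(pn + r)` sits `r`
places (cyclically) below the bit selected by `w_i(n)`, which is exactly the bit that the
rotation in `x_r(i)` moves to the latter position. Since `x_r(i)` is `i` XOR that rotation,
`w_{x_r(i)}(n) = w_i(pn + r) · w_i(n)`, and `w_i(n)² = 1`.
-/

theorem Nat.digits_sum_mul_add {p r : ℕ} (n : ℕ) (hr : r < p) :
    (Nat.digits p (p * n + r)).sum = r + (Nat.digits p n).sum := by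
  obtain rfl | hp : p = 1 ∨ 1 < p := by omega
  · simp [Nat.digits_one, show r = 0 by omega]
  obtain ⟨rfl, rfl⟩ | hrn := em (r = 0 ∧ n = 0)
  · simp
  rw [add_comm (p * n), Nat.digits_add p hp r n hr (by tauto), List.sum_cons]

theorem vp_mul_add {p r : ℕ} (n : ℕ) (hr : r < p) : vp p (p * n + r) = (r + vp p n) % p := by
  rw [vp, vp, Nat.digits_sum_mul_add n hr, Nat.add_mod_mod]

def bitRotate (p r i : ℕ) : ℕ := (i * 2 ^ r) % 2 ^ p + i / 2 ^ (p - r)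

theorem xorShift_eq_xor_bitRotate (p r i : ℕ) : xorShift p r i = i ^^^ bitRotate p r i := rfl

theorem testBit_bitRotate {p r i k : ℕ} (hr : r < p) (hi : i < 2 ^ p) (hk : k < p) :
    (bitRotate p r i).testBit k = i.testBit ((k + (p - r)) % p) := by
  have hpow : 2 ^ p = 2 ^ (p - r) * 2 ^ r := by rw [← pow_add, Nat.sub_add_cancel hr.le]
  have hlow : (i * 2 ^ r) % 2 ^ p = 2 ^ r * (i % 2 ^ (p - r)) := by
    rw [hpow, Nat.mul_mod_mul_right, Nat.mul_comm]
  have hhigh : i / 2 ^ (p - r) < 2 ^ r := by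
    rw [Nat.div_lt_iff_lt_mul (Nat.two_pow_pos _), mul_comm, ← hpow]
    exact hi
  rw [bitRotate, hlow, Nat.testBit_two_pow_mul_add _ hhigh]
  split_ifs with hkr
  · rw [← Nat.shiftRight_eq_div_pow, Nat.testBit_shiftRight, Nat.mod_eq_of_lt (by omega),
      add_comm]
  · have hmod : (k + (p - r)) % p = k - r := by
      rw [show k + (p - r) = k - r + p by omega, Nat.add_mod_right, Nat.mod_eq_of_lt (by omega)]
    rw [hmod, Nat.testBit_mod_two_pow, decide_eq_true (by omega), Bool.true_and]

theorem sub_one_sub_add_sub_mod {p r t : ℕ} (hr : r < p) (ht : t < p) :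
    (p - 1 - t + (p - r)) % p = p - 1 - (r + t) % p := by
  obtain hlt | hge := lt_or_ge (r + t) p
  · rw [Nat.mod_eq_of_lt hlt, show p - 1 - t + (p - r) = p - 1 - (r + t) + p by omega,
      Nat.add_mod_right, Nat.mod_eq_of_lt (by omega)]
  · rw [Nat.mod_eq_sub_mod hge, Nat.mod_eq_of_lt (by omega), Nat.mod_eq_of_lt (by omega)]
    omega

theorem w_eq_neg_one_pow_testBit (p i n : ℕ) :
    w p i n = (-1 : ℝ) ^ (i.testBit (p - 1 - vp p n)).toNat := by
  rw [w, Nat.toNat_testBit]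

theorem neg_one_pow_toNat_xor_mul_self (a b : Bool) :
    (-1 : ℝ) ^ (a ^^ b).toNat * (-1 : ℝ) ^ b.toNat = (-1 : ℝ) ^ a.toNat := by
  cases a <;> cases b <;> norm_num

theorem w_recurrence_general (p : ℕ) (i : ℕ) (hi : i ≤ 2 ^ p - 1)
    (n r : ℕ) (hr : r < p) :
    w p i (p * n + r) = w p (xorShift p r i) n * w p i n := by
  have hi' : i < 2 ^ p := by have := Nat.one_le_two_pow (n := p); omega
  have ht : vp p n < p := Nat.mod_lt _ (by omega)
  have hbit :
      (bitRotate p r i).testBit (p - 1 - vp p n) = i.testBit (p - 1 - vp p (p * n + r)) := by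
    rw [testBit_bitRotate hr hi' (by omega), sub_one_sub_add_sub_mod hr ht, vp_mul_add n hr]
  simp only [w_eq_neg_one_pow_testBit, xorShift_eq_xor_bitRotate, Nat.testBit_xor]
  rw [Bool.xor_comm, neg_one_pow_toNat_xor_mul_self, hbit]

/-- XOR-shift recurrence for weight sequences: w_i(pn+r) = w_{x_r(i)}(n) w_i(n). -/
theorem w_recurrence (p : ℕ) (hp : 2 ≤ p) (i : ℕ) (hi : i ≤ 2 ^ p - 1)
    (n r : ℕ) (hr : r < p) :
    w p i (p * n + r) = w p (xorShift p r i) n * w p i n :=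
  w_recurrence_general p i hi n r hr
end
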